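/- arXiv:1303.5869 — 2 statements merged into one kernel-verified Lean document; each statement's English description precedes it below -/
import Mathlib

section
/- Assume ν ≥ q+1. Then for every z ∈ ℝ the rank of 𝓝(z) equals q·min{μ,r} and the kernel of 𝓝(z) has dimension νr − q·min{μ,r} > 0; in particular 𝓝(z) never has full column rank. -/
/-!
Each entry of `𝓝(z)` is a Taylor coefficient of `(z + h)^(a+b)`, so the Taylor shift gives
`𝓝(z) = (I ⊗ Ũ(z)) Â (I ⊗ W̃(z))` with unitriangular outer factors and `rank 𝓝(z) = rank Â`.
Vandermonde's identity factors `Â = L R` (`ahatLeft`, `ahatRight`) through a space of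
dimension `q · min μ r`, which bounds the rank from above. On the rows `(k, σ)` of `L` and the
columns `(σ, k)` of `R` (`k < min μ r`, `σ < q`; the latter needs `q ≤ ν`) both factors are
block unitriangular, so the corresponding square submatrix of `Â` is invertible, which bounds
the rank from below. The kernel dimension is then rank–nullity, and it is positive since
`ν r ≥ (q + 1) r > q · min μ r`.
-/

open Matrix Kronecker

noncomputable section

/-- The `k × k` shift matrix with `(i,j)` entry `δ_{i+1,j}`. -/
def Sh (k : ℕ) : Matrix (Fin k) (Fin k) ℝ :=
  Matrix.of fun i j => if (i : ℕ) + 1 = (j : ℕ) then 1 else 0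

/-- The matrix `A^k(z) ∈ ℝ^{q×r}`, with entries
`k!/(i!·j!·(k−i−j)!)·z^{k−i−j} = C(k,i)·C(k−i,j)·z^{k−i−j}` for `i+j ≤ k`, else `0`. -/
def Amat (q r k : ℕ) (z : ℝ) : Matrix (Fin q) (Fin r) ℝ :=
  Matrix.of fun i j =>
    if (i : ℕ) + (j : ℕ) ≤ k then
      (Nat.choose k i : ℝ) * (Nat.choose (k - i) j : ℝ) * z ^ (k - i - j)
    else 0

/-- The block matrix `𝒜(z) ∈ ℝ^{μq×νr}` with `(i,j)` block `A^{i+j}(z)`. -/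
def Acal (q r μ ν : ℕ) (z : ℝ) : Matrix (Fin μ × Fin q) (Fin ν × Fin r) ℝ :=
  Matrix.of fun p p' => Amat q r ((p.1 : ℕ) + (p'.1 : ℕ)) z p.2 p'.2

/-- `A^0 = e₀ f₀ᵀ ∈ ℝ^{q×r}`. -/
def A0 (q r : ℕ) : Matrix (Fin q) (Fin r) ℝ :=
  Matrix.of fun a b => if (a : ℕ) = 0 ∧ (b : ℕ) = 0 then 1 else 0

/-- The block matrix `Ā ∈ ℝ^{μq×νr}` with `(i,j)` block `(S_qᵀ)^j · A^0 · S_r^i`. -/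
def Abar (q r μ ν : ℕ) : Matrix (Fin μ × Fin q) (Fin ν × Fin r) ℝ :=
  Matrix.of fun p p' =>
    (((Sh q)ᵀ) ^ (p'.1 : ℕ) * A0 q r * (Sh r) ^ (p.1 : ℕ)) p.2 p'.2

/-- `J_k(z) = z·I_k + S_kᵀ`. -/
def Jmat (k : ℕ) (z : ℝ) : Matrix (Fin k) (Fin k) ℝ := z • 1 + (Sh k)ᵀ

/-- The block lower-triangular matrix `𝓛_{m,k}(z)` with `(i,j)` block `C(i,j)·J_k(z)^{i−j}`
for `i ≥ j` and `0` otherwise. -/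
def Lmat (m k : ℕ) (z : ℝ) : Matrix (Fin m × Fin k) (Fin m × Fin k) ℝ :=
  Matrix.of fun p p' =>
    if (p'.1 : ℕ) ≤ (p.1 : ℕ) then
      (Nat.choose p.1 p'.1 : ℝ) * ((Jmat k z) ^ ((p.1 : ℕ) - (p'.1 : ℕ))) p.2 p'.2
    else 0

/-- Natural (block row-major) identification of `Fin (m*n)` with `Fin m × Fin n`. -/
def bIdx (m n : ℕ) : Fin (m * n) → Fin m × Fin n := fun x => finProdFinEquiv.symm x

/-- `M^{(n)}(z) ∈ ℝ^{q×r}`, the `n`-th derivative of `M(z) = u(z)w(z)`,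
whose `(a,b)` entry is the `n`-th derivative of `z^{a+b}`. -/
def Md (q r n : ℕ) (z : ℝ) : Matrix (Fin q) (Fin r) ℝ :=
  Matrix.of fun a b => iteratedDeriv n (fun t : ℝ => t ^ ((a : ℕ) + (b : ℕ))) z

/-- The block matrix `𝓜(z) ∈ ℝ^{μq×νr}` with `(i,j)` block `M^{(i+j)}(z)`. -/
def Mcal (q r μ ν : ℕ) (z : ℝ) : Matrix (Fin μ × Fin q) (Fin ν × Fin r) ℝ :=
  Matrix.of fun p p' => Md q r ((p.1 : ℕ) + (p'.1 : ℕ)) z p.2 p'.2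

/-- The block matrix `𝓝(z) ∈ ℝ^{μq×νr}` with `(i,j)` block `M^{(i+j)}(z)/(i!·j!)`. -/
def Ncal (q r μ ν : ℕ) (z : ℝ) : Matrix (Fin μ × Fin q) (Fin ν × Fin r) ℝ :=
  Matrix.of fun p p' =>
    Md q r ((p.1 : ℕ) + (p'.1 : ℕ)) z p.2 p'.2 /
      ((Nat.factorial (p.1 : ℕ) : ℝ) * (Nat.factorial (p'.1 : ℕ) : ℝ))

/-- `𝓝^0(z) = (M(z)/0!, …, M^{(ν−1)}(z)/(ν−1)!) ∈ ℝ^{q×νr}`. -/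
def Ncal0 (q r ν : ℕ) (z : ℝ) : Matrix (Fin q) (Fin ν × Fin r) ℝ :=
  Matrix.of fun a p => Md q r (p.1 : ℕ) z a p.2 / (Nat.factorial (p.1 : ℕ) : ℝ)

/-- `𝓜^0(z) = (M(z), M'(z), …, M^{(ν−1)}(z)) ∈ ℝ^{q×νr}`. -/
def M0cal (q r ν : ℕ) (z : ℝ) : Matrix (Fin q) (Fin ν × Fin r) ℝ :=
  Matrix.of fun a p => Md q r (p.1 : ℕ) z a p.2

/-- `U_q(z)` with columns `u(z), u'(z), …, u^{(q−1)}(z)`, where `u_a(z) = z^a`. -/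
def Uq (q : ℕ) (z : ℝ) : Matrix (Fin q) (Fin q) ℝ :=
  Matrix.of fun a j => iteratedDeriv (j : ℕ) (fun t : ℝ => t ^ (a : ℕ)) z

/-- `W_r(z)` with rows `w(z), w'(z), …, w^{(r−1)}(z)`, where `w_b(z) = z^b`. -/
def Wrm (r : ℕ) (z : ℝ) : Matrix (Fin r) (Fin r) ℝ :=
  Matrix.of fun i b => iteratedDeriv (i : ℕ) (fun t : ℝ => t ^ (b : ℕ)) z

/-- `Ũ_m(z)` with entries `C(i,j)·z^{i−j}` for `i ≥ j` and `0` otherwise. -/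
def Ut (m : ℕ) (z : ℝ) : Matrix (Fin m) (Fin m) ℝ :=
  Matrix.of fun i j =>
    if (j : ℕ) ≤ (i : ℕ) then (Nat.choose i j : ℝ) * z ^ ((i : ℕ) - (j : ℕ)) else 0

/-- `W̃_m(z)` with entries `C(j,i)·z^{j−i}` for `j ≥ i` and `0` otherwise. -/
def Wt (m : ℕ) (z : ℝ) : Matrix (Fin m) (Fin m) ℝ :=
  Matrix.of fun i j =>
    if (i : ℕ) ≤ (j : ℕ) then (Nat.choose j i : ℝ) * z ^ ((j : ℕ) - (i : ℕ)) else 0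

/-- `D_m`, the diagonal matrix with `(i,i)` entry `i!`. -/
def Dm (m : ℕ) : Matrix (Fin m) (Fin m) ℝ :=
  Matrix.diagonal fun i => (Nat.factorial (i : ℕ) : ℝ)

/-- The block matrix `Â` whose `(i,j)` block has `(k,l)` entry `C(i+j,i)` if `k+l = i+j`, else 0. -/
def Ahat (q r μ ν : ℕ) : Matrix (Fin μ × Fin q) (Fin ν × Fin r) ℝ :=
  Matrix.of fun p p' =>
    if (p.2 : ℕ) + (p'.2 : ℕ) = (p.1 : ℕ) + (p'.1 : ℕ) then
      (Nat.choose ((p.1 : ℕ) + (p'.1 : ℕ)) (p.1 : ℕ) : ℝ)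
    else 0

/-- `F(z) ∈ ℝ^{r×(r−1)}` with `F_{ii} = −z`, `F_{i+1,i} = 1`, else `0`. -/
def Fm (r : ℕ) (z : ℝ) : Matrix (Fin r) (Fin (r - 1)) ℝ :=
  Matrix.of fun a b =>
    if (a : ℕ) = (b : ℕ) then -z else if (a : ℕ) = (b : ℕ) + 1 then 1 else 0

/-- `F'(z)`, the (constant) derivative of `F(z)`: `−1` on the diagonal, `0` elsewhere. -/
def Fm' (r : ℕ) : Matrix (Fin r) (Fin (r - 1)) ℝ :=
  Matrix.of fun a b => if (a : ℕ) = (b : ℕ) then -1 else 0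

/-- `G(z) ∈ ℝ^{r×r}` with entries `z^{j−i−1}` for `j > i`, else `0`. -/
def Gm (r : ℕ) (z : ℝ) : Matrix (Fin r) (Fin r) ℝ :=
  Matrix.of fun i j => if (i : ℕ) < (j : ℕ) then z ^ ((j : ℕ) - (i : ℕ) - 1) else 0

/-- entrywise `j`-th derivative `G^{(n)}(z)`. -/
def Gd (r n : ℕ) (z : ℝ) : Matrix (Fin r) (Fin r) ℝ :=
  Matrix.of fun i j =>
    iteratedDeriv n (fun t : ℝ => if (i : ℕ) < (j : ℕ) then t ^ ((j : ℕ) - (i : ℕ) - 1) else 0) z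

/-- the row vector `w(z)` with entries `z^b`. -/
def wv (r : ℕ) (z : ℝ) : Fin r → ℝ := fun b => z ^ (b : ℕ)

/-- the `n`-th derivative `w^{(n)}(z)`. -/
def wd (r n : ℕ) (z : ℝ) : Fin r → ℝ := fun b => iteratedDeriv n (fun t : ℝ => t ^ (b : ℕ)) z

/-- the `n`-th derivative `u^{(n)}(z)` of the column vector `u(z)` with entries `z^a`. -/
def ud (q n : ℕ) (z : ℝ) : Fin q → ℝ := fun a => iteratedDeriv n (fun t : ℝ => t ^ (a : ℕ)) z

/-- The matrix `K̄(z)`: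
`[[I_q⊗F(z) + S_q⊗F'(z), −ℓ_q fᵀ ⊗ G(z)], [0, I_{ν−q}⊗I_r − S_{ν−q}⊗G(z)]]`. -/
def Kbar (q r ν : ℕ) (z : ℝ) :
    Matrix (Fin ν × Fin r) ((Fin q × Fin (r - 1)) ⊕ (Fin (ν - q) × Fin r)) ℝ :=
  Matrix.of fun p s =>
    match s with
    | Sum.inl c =>
        (if (p.1 : ℕ) = (c.1 : ℕ) then Fm r z p.2 c.2 else 0) +
        (if (p.1 : ℕ) + 1 = (c.1 : ℕ) then Fm' r p.2 c.2 else 0)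
    | Sum.inr c =>
        (if (p.1 : ℕ) = q + (c.1 : ℕ) then (if p.2 = c.2 then 1 else 0) else 0) +
        (if (p.1 : ℕ) + 1 = q + (c.1 : ℕ) then -(Gm r z p.2 c.2) else 0)

/-- `F_k(z) ∈ ℝ^{(r−k)×(r−1−k)}`. -/
def Fmk (r k : ℕ) (z : ℝ) : Matrix (Fin (r - k)) (Fin (r - (k + 1))) ℝ :=
  Matrix.of fun a b =>
    if (a : ℕ) = (b : ℕ) then -z else if (a : ℕ) = (b : ℕ) + 1 then 1 else 0

/-- `F_k'(z)`, the (constant) derivative of `F_k(z)`. -/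
def Fmk' (r k : ℕ) : Matrix (Fin (r - k)) (Fin (r - (k + 1))) ℝ :=
  Matrix.of fun a b => if (a : ℕ) = (b : ℕ) then -1 else 0

/-- `K_k(z) = I_ν ⊗ F_k(z) + S_ν ⊗ F_k'(z)`. -/
def Kk (ν r k : ℕ) (z : ℝ) :
    Matrix (Fin ν × Fin (r - k)) (Fin ν × Fin (r - (k + 1))) ℝ :=
  (1 : Matrix (Fin ν) (Fin ν) ℝ) ⊗ₖ Fmk r k z + Sh ν ⊗ₖ Fmk' r k

/-- `KP ν r z m = K_0(z) · K_1(z) ⋯ K_{m−1}(z)` (so `KP ν r z μ = 𝒦^{μ−1}(z)`). -/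
def KP (ν r : ℕ) (z : ℝ) : (m : ℕ) → Matrix (Fin ν × Fin r) (Fin ν × Fin (r - m)) ℝ
  | 0 => Matrix.of fun p p' => if p.1 = p'.1 ∧ (p.2 : ℕ) = (p'.2 : ℕ) then 1 else 0
  | m + 1 => KP ν r z m * Kk ν r m z

/-- `𝒜^0 = (A^0, A^1, …, A^{ν−1}) ∈ ℝ^{q×νr}` (at `z = 0`). -/
def A0row (q r ν : ℕ) : Matrix (Fin q) (Fin ν × Fin r) ℝ :=
  Matrix.of fun a p =>
    if (a : ℕ) + (p.2 : ℕ) = (p.1 : ℕ) then (Nat.choose (p.1 : ℕ) (a : ℕ) : ℝ) else 0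

/-- `B^k ∈ ℝ^{r×q}` with entries `(−1)^i·C(q,k+1)` if `i+j = k`, else `0`. -/
def Bk (q r k : ℕ) : Matrix (Fin r) (Fin q) ℝ :=
  Matrix.of fun i j =>
    if (i : ℕ) + (j : ℕ) = k then (-1 : ℝ) ^ (i : ℕ) * (Nat.choose q (k + 1) : ℝ) else 0

/-- `𝓑^0 ∈ ℝ^{νr×q}`, the blocks `B^0, …, B^{ν−1}` stacked vertically. -/
def B0cal (q r ν : ℕ) : Matrix (Fin ν × Fin r) (Fin q) ℝ :=
  Matrix.of fun p j => Bk q r (p.1 : ℕ) p.2 j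

/-- Left multiplication by a fixed matrix, as a linear map. -/
def mulLeftLM {m n p : Type*} [Fintype n] (M : Matrix m n ℝ) :
    Matrix n p ℝ →ₗ[ℝ] Matrix m p ℝ where
  toFun X := M * X
  map_add' X Y := Matrix.mul_add M X Y
  map_smul' c X := by simp [Matrix.mul_smul]

/-- The right inverse `𝓜(z)⁺`. -/
def Mplus (q r μ ν : ℕ) (z : ℝ) : Matrix (Fin ν × Fin r) (Fin μ × Fin q) ℝ :=
  ((1 : Matrix (Fin ν) (Fin ν) ℝ) ⊗ₖ (Wrm r z)⁻¹) * (Lmat ν r 0)⁻¹ *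
    (Abar q r μ ν)ᵀ * (Lmat μ q 0)⁻¹ * ((1 : Matrix (Fin μ) (Fin μ) ℝ) ⊗ₖ (Uq q z)⁻¹)

open Finset Polynomial

theorem sum_fin_ite_add_eq_coeff_mul {R : Type*} [CommSemiring R] {P Q : R[X]} {q r : ℕ}
    (hP : P.natDegree < q) (hQ : Q.natDegree < r) (n : ℕ) :
    ∑ a : Fin q, ∑ b : Fin r, (if (a : ℕ) + b = n then P.coeff a * Q.coeff b else 0) =
      (P * Q).coeff n := by
  conv_rhs => rw [P.as_sum_range' q hP, Q.as_sum_range' r hQ, sum_mul_sum, finsetSum_coeff]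
  simp only [monomial_mul_monomial, finsetSum_coeff, coeff_monomial]
  rw [← Fin.sum_univ_eq_sum_range]
  exact sum_congr rfl fun a _ =>
    Fin.sum_univ_eq_sum_range (fun b => if (a : ℕ) + b = n then P.coeff a * Q.coeff b else 0) r

theorem Nat.sum_ite_choose_mul_choose {m q : ℕ} (i s t : ℕ) (hs : s < q) (hit : min i t < m) :
    ∑ y : Fin m × Fin q, (if s + y.1 = i + y.2 then s.choose y.2 * t.choose y.1 else 0) =
      (s + t).choose i := by
  rw [Nat.add_choose_eq]
  symm
  refine sum_bij_ne_zero (fun x hx hne => (⟨x.2, ?_⟩, ⟨s - x.1, by omega⟩)) ?_ ?_ ?_ ?_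
  · have := mem_antidiagonal.mp hx
    have := Nat.choose_ne_zero_iff.mp (right_ne_zero_of_mul hne)
    omega
  · simp
  · intro x hx _ x' hx' _ h
    have := mem_antidiagonal.mp hx
    have := mem_antidiagonal.mp hx'
    simp only [Prod.mk.injEq, Fin.mk.injEq] at h
    ext <;> omega
  · intro y _ hne
    obtain ⟨hy, hσ, hk⟩ : s + y.1 = i + y.2 ∧ (y.2 : ℕ) ≤ s ∧ (y.1 : ℕ) ≤ t := by
      split_ifs at hne with h
      · exact ⟨h, Nat.choose_ne_zero_iff.mp (left_ne_zero_of_mul hne),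
          Nat.choose_ne_zero_iff.mp (right_ne_zero_of_mul hne)⟩
      · exact absurd rfl hne
    refine ⟨(i - y.1, y.1), mem_antidiagonal.mpr (by omega), ?_, ?_⟩
    · exact mul_ne_zero (Nat.choose_ne_zero_iff.mpr (by omega)) (Nat.choose_ne_zero_iff.mpr hk)
    · ext
      · rfl
      · dsimp only
        omega
  · intro x hx hne
    have := mem_antidiagonal.mp hx
    have := Nat.choose_ne_zero_iff.mp (left_ne_zero_of_mul hne)
    dsimp only
    rw [if_pos (by omega), Nat.choose_symm this]

theorem one_kronecker_mul_mul_one_kronecker_apply {R ι κ m n : Type*} [CommSemiring R]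
    [Fintype ι] [Fintype κ] [Fintype m] [Fintype n] [DecidableEq ι] [DecidableEq κ]
    (U : Matrix m m R) (A : Matrix (ι × m) (κ × n) R) (W : Matrix n n R)
    (i : ι) (a : m) (j : κ) (b : n) :
    (((1 : Matrix ι ι R) ⊗ₖ U) * A * ((1 : Matrix κ κ R) ⊗ₖ W)) (i, a) (j, b) =
      ∑ s, ∑ t, U a s * A (i, s) (j, t) * W t b := by
  simp only [mul_apply, Fintype.sum_prod_type, kroneckerMap_apply, one_apply, ite_mul, one_mul,
    zero_mul, mul_ite, mul_zero, sum_ite_irrel, sum_const_zero, sum_ite_eq, sum_ite_eq', mem_univ,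
    if_true, sum_mul]
  exact sum_comm

theorem det_one_kronecker {R m n : Type*} [CommRing R] [Fintype m] [Fintype n] [DecidableEq m]
    [DecidableEq n] {U : Matrix n n R} (hU : U.det = 1) : ((1 : Matrix m m R) ⊗ₖ U).det = 1 := by
  rw [det_kronecker, det_one, hU, one_pow, one_pow, one_mul]

theorem det_eq_one_of_blockTriangular {R ι α : Type*} [CommRing R] [Fintype ι] [DecidableEq ι]
    [LinearOrder α] {M : Matrix ι ι R} {b : ι → α} (hM : M.BlockTriangular b)
    (hdiag : ∀ x y, b x = b y → M x y = (1 : Matrix ι ι R) x y) : M.det = 1 := by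
  rw [hM.det]
  refine prod_eq_one fun a _ => ?_
  have hblock : M.toSquareBlock b a = 1 := by
    ext ⟨x, hx⟩ ⟨y, hy⟩
    simp only [toSquareBlock_def, of_apply, hdiag x y (hx.trans hy.symm), one_apply,
      Subtype.mk.injEq]
  rw [hblock, det_one]

theorem Matrix.rank_add_finrank_ker_mulVecLin {K m n : Type*} [Field K] [Fintype m] [Fintype n]
    (A : Matrix m n K) :
    A.rank + Module.finrank K (LinearMap.ker A.mulVecLin) = Fintype.card n := by
  rw [rank, LinearMap.finrank_range_add_finrank_ker, Module.finrank_fintype_fun_eq_card]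

theorem coeff_X_add_C_pow_eq_ite {R : Type*} [CommSemiring R] (z : R) (a s : ℕ) :
    ((X + C z) ^ a).coeff s = if s ≤ a then (a.choose s : R) * z ^ (a - s) else 0 := by
  rw [coeff_X_add_C_pow]
  split_ifs with h
  · ring
  · simp [Nat.choose_eq_zero_of_lt (not_le.mp h)]

theorem Ncal_apply (q r μ ν : ℕ) (z : ℝ) (i : Fin μ) (a : Fin q) (j : Fin ν) (b : Fin r) :
    Ncal q r μ ν z (i, a) (j, b) =
      ((i + j : ℕ).choose i : ℝ) *
        (((a + b : ℕ).choose (i + j) : ℝ) * z ^ (a + b - (i + j) : ℕ)) := by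
  have key := Nat.add_choose_mul_factorial_mul_factorial (j : ℕ) i
  rw [add_comm (j : ℕ)] at key
  simp only [Ncal, Md, of_apply, iteratedDeriv_pow, Nat.descFactorial_eq_factorial_mul_choose,
    ← key]
  push_cast
  field_simp

theorem Ncal_eq_kronecker_mul_Ahat_mul_kronecker (q r μ ν : ℕ) (z : ℝ) :
    Ncal q r μ ν z = ((1 : Matrix (Fin μ) (Fin μ) ℝ) ⊗ₖ Ut q z) * Ahat q r μ ν *
      ((1 : Matrix (Fin ν) (Fin ν) ℝ) ⊗ₖ Wt r z) := by
  ext ⟨i, a⟩ ⟨j, b⟩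
  have hP : ((X + C z) ^ (a : ℕ)).natDegree < q := by rw [natDegree_pow_X_add_C]; exact a.isLt
  have hQ : ((X + C z) ^ (b : ℕ)).natDegree < r := by rw [natDegree_pow_X_add_C]; exact b.isLt
  rw [one_kronecker_mul_mul_one_kronecker_apply, Ncal_apply]
  simp only [Ut, Wt, Ahat, of_apply, ← coeff_X_add_C_pow_eq_ite]
  calc _ = ((i + j : ℕ).choose i : ℝ) * ((X + C z) ^ ((a : ℕ) + b)).coeff (i + j) := by
        rw [coeff_X_add_C_pow]; ring
    _ = ((i + j : ℕ).choose i : ℝ) * ∑ s : Fin q, ∑ t : Fin r, (if (s : ℕ) + t = i + j then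
          ((X + C z) ^ (a : ℕ)).coeff s * ((X + C z) ^ (b : ℕ)).coeff t else 0) := by
        rw [sum_fin_ite_add_eq_coeff_mul hP hQ, pow_add]
    _ = _ := by
        simp only [mul_sum]
        refine sum_congr rfl fun s _ => sum_congr rfl fun t _ => ?_
        split_ifs <;> ring

theorem det_Ut (m : ℕ) (z : ℝ) : (Ut m z).det = 1 := by
  rw [det_of_isLowerTriangular]
  · simp [Ut]
  · intro i j (hij : i < j)
    simp only [Ut, of_apply]
    exact if_neg (by omega)

theorem det_Wt (m : ℕ) (z : ℝ) : (Wt m z).det = 1 := by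
  rw [det_of_isUpperTriangular]
  · simp [Wt]
  · intro i j (hij : j < i)
    simp only [Wt, of_apply]
    exact if_neg (by omega)

theorem rank_Ncal_eq_rank_Ahat (q r μ ν : ℕ) (z : ℝ) :
    (Ncal q r μ ν z).rank = (Ahat q r μ ν).rank := by
  rw [Ncal_eq_kronecker_mul_Ahat_mul_kronecker, rank_mul_eq_left_of_isUnit_det,
    rank_mul_eq_right_of_isUnit_det] <;>
    simp [det_one_kronecker, det_Ut, det_Wt]

def ahatLeft (q μ m : ℕ) : Matrix (Fin μ × Fin q) (Fin m × Fin q) ℝ :=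
  of fun x y => if (x.2 : ℕ) + y.1 = x.1 + y.2 then ((x.2 : ℕ).choose y.2 : ℝ) else 0

def ahatRight (q r m ν : ℕ) : Matrix (Fin m × Fin q) (Fin ν × Fin r) ℝ :=
  of fun x y => if (y.1 : ℕ) + x.1 = y.2 + x.2 then ((y.2 : ℕ).choose x.1 : ℝ) else 0

theorem Ahat_eq_ahatLeft_mul_ahatRight (q r μ ν : ℕ) :
    Ahat q r μ ν = ahatLeft q μ (min μ r) * ahatRight q r (min μ r) ν := by
  ext ⟨i, s⟩ ⟨j, t⟩
  simp only [Ahat, ahatLeft, ahatRight, mul_apply, of_apply, ite_mul, mul_ite, zero_mul,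
    mul_zero]
  split_ifs with hst
  · rw [show (i : ℕ) + j = s + t by omega,
      ← Nat.sum_ite_choose_mul_choose (m := min μ r) (i : ℕ) s t s.isLt (by omega)]
    push_cast
    refine sum_congr rfl fun y _ => ?_
    split_ifs <;> first | rfl | omega
  · refine (sum_eq_zero fun y _ => ?_).symm
    split_ifs <;> first | rfl | omega

theorem det_ahatLeft_submatrix (q μ m : ℕ) (hm : m ≤ μ) :
    ((ahatLeft q μ m).submatrix (fun x => (Fin.castLE hm x.1, x.2)) id).det = 1 := by
  refine det_eq_one_of_blockTriangular (b := fun x => OrderDual.toDual x.2) ?_ ?_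
  · rintro ⟨k', σ'⟩ ⟨k, σ⟩ (h : σ' < σ)
    simp only [ahatLeft, submatrix_apply, of_apply, id, Fin.val_castLE]
    rw [Nat.choose_eq_zero_of_lt h, Nat.cast_zero, ite_self]
  · rintro ⟨k', σ'⟩ ⟨k, σ⟩ (rfl : σ' = σ)
    simp only [ahatLeft, submatrix_apply, of_apply, id, Fin.val_castLE, one_apply, Prod.mk.injEq,
      Nat.choose_self, Nat.cast_one, add_comm (σ' : ℕ), add_left_inj, Fin.val_inj, and_true]
    exact if_congr eq_comm rfl rfl

theorem det_ahatRight_submatrix (q r m ν : ℕ) (hq : q ≤ ν) (hm : m ≤ r) :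
    ((ahatRight q r m ν).submatrix id (fun x => (Fin.castLE hq x.2, Fin.castLE hm x.1))).det =
      1 := by
  refine det_eq_one_of_blockTriangular (b := fun x => x.1) ?_ ?_
  · rintro ⟨k, σ⟩ ⟨k', σ'⟩ (h : k' < k)
    simp only [ahatRight, submatrix_apply, of_apply, id, Fin.val_castLE]
    rw [Nat.choose_eq_zero_of_lt h, Nat.cast_zero, ite_self]
  · rintro ⟨k, σ⟩ ⟨k', σ'⟩ (rfl : k = k')
    simp only [ahatRight, submatrix_apply, of_apply, id, Fin.val_castLE, one_apply, Prod.mk.injEq,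
      Nat.choose_self, Nat.cast_one, add_comm (σ' : ℕ), add_right_inj, Fin.val_inj, true_and]
    exact if_congr eq_comm rfl rfl

theorem rank_Ahat {q r μ ν : ℕ} (hqν : q ≤ ν) : (Ahat q r μ ν).rank = q * min μ r := by
  have hcard : Fintype.card (Fin (min μ r) × Fin q) = q * min μ r := by simp [mul_comm]
  apply le_antisymm
  · calc (Ahat q r μ ν).rank ≤ (ahatRight q r (min μ r) ν).rank := by
          rw [Ahat_eq_ahatLeft_mul_ahatRight]; exact rank_mul_le_right _ _
      _ ≤ q * min μ r := hcard ▸ rank_le_card_height _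
  · set rows : Fin (min μ r) × Fin q → Fin μ × Fin q :=
      fun x => (Fin.castLE (min_le_left _ _) x.1, x.2)
    set cols : Fin (min μ r) × Fin q → Fin ν × Fin r :=
      fun x => (Fin.castLE hqν x.2, Fin.castLE (min_le_right _ _) x.1)
    have hsquare : ((Ahat q r μ ν).submatrix rows cols).det = 1 := by
      rw [Ahat_eq_ahatLeft_mul_ahatRight, submatrix_mul _ _ _ id _ Function.bijective_id, det_mul,
        det_ahatLeft_submatrix, det_ahatRight_submatrix, one_mul]
    calc q * min μ r = ((Ahat q r μ ν).submatrix rows cols).rank := by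
          rw [rank_of_isUnit _ ((isUnit_iff_isUnit_det _).mpr (hsquare ▸ isUnit_one)), hcard]
      _ ≤ (Ahat q r μ ν).rank := rank_submatrix_le _ _ _

theorem statement15_general (q r μ ν : ℕ) (hr : 0 < r) (hνq : q + 1 ≤ ν) :
    ∀ z : ℝ,
      (Ncal q r μ ν z).rank = q * min μ r ∧
      Module.finrank ℝ (LinearMap.ker (Ncal q r μ ν z).mulVecLin) = ν * r - q * min μ r ∧
      0 < ν * r - q * min μ r ∧
      ¬ Function.Injective (Ncal q r μ ν z).mulVecLin := by
  intro z
  have hrank : (Ncal q r μ ν z).rank = q * min μ r := by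
    rw [rank_Ncal_eq_rank_Ahat, rank_Ahat (by omega)]
  have hker :
      Module.finrank ℝ (LinearMap.ker (Ncal q r μ ν z).mulVecLin) = ν * r - q * min μ r := by
    have := (Ncal q r μ ν z).rank_add_finrank_ker_mulVecLin
    rw [hrank, Fintype.card_prod, Fintype.card_fin, Fintype.card_fin] at this
    omega
  have hlt : q * min μ r < ν * r :=
    calc q * min μ r ≤ q * r := Nat.mul_le_mul_left _ (min_le_right _ _)
      _ < (q + 1) * r := by rw [add_mul, one_mul]; omega
      _ ≤ ν * r := Nat.mul_le_mul_right _ hνq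
  refine ⟨hrank, hker, by omega, fun hinj => ?_⟩
  rw [LinearMap.ker_eq_bot.mpr hinj, finrank_bot] at hker
  omega

theorem statement15 (q r μ ν : ℕ) (hq : 0 < q) (hr : 0 < r) (hμ : 0 < μ) (hν : 0 < ν)
    (hνq : q + 1 ≤ ν) :
    ∀ z : ℝ,
      (Ncal q r μ ν z).rank = q * min μ r ∧
      Module.finrank ℝ (LinearMap.ker (Ncal q r μ ν z).mulVecLin) = ν * r - q * min μ r ∧
      0 < ν * r - q * min μ r ∧
      ¬ Function.Injective (Ncal q r μ ν z).mulVecLin :=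
  statement15_general q r μ ν hr hνq
end
end

section
/- Assume r ≥ q and ν ≥ q. Then the constant matrix C = (I_ν ⊗ D_r^{−1})·𝓑^0·D_q^{−1} ∈ ℝ^{νr×q} satisfies 𝓜^0(z)·C = I_q for all z ∈ ℝ. Moreover, a constant matrix C ∈ ℝ^{νr×q} with 𝓜^0(z)·C = I_q for all z is unique if and only if ν = q. -/
/-
The entry of `𝓜^0(z)` in row `a` and column `(k, b)` is `(a+b)^{\underline k} z^{a+b-k}`. Against the
explicit `C`, the `(a, c)` entry of `𝓜^0(z) C` collapses to
`C(a,c) z^{a-c} Σ_b (-1)^b C(a+b,b) C(q,b+c+1)`, and Chu–Vandermonde with the negative upper index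
`-(a+1)` evaluates the sum to `C(q-a-1, q-c-1) = δ_{ac}` (this uses `a < q`).

For uniqueness, read a vector `v` block by block as polynomials `P_k = Σ_b v_{k,b} X^b`; then
`𝓜^0(z) v = 0` for all `z` says `Σ_k (X^a P_k)^{(k)} = 0` for `a < q`. By Leibniz this is a
unitriangular system in `Q_i = Σ_k C(k,i) P_k^{(k-i)}`, and when `ν = q` the equations `Q_i = 0`,
`i < q`, are in turn unitriangular in the `P_k`, so `v = 0`. When `ν > q` there is room for a kernel
vector supported on the entries `(b+1, b)`, `b < q`; these only have to solve `q - 1` linear equations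
in `q` unknowns.
-/

open Matrix Kronecker

noncomputable section

open Finset Nat Polynomial

theorem Fin.sum_ite_val_eq {M : Type*} [AddCommMonoid M] {n : ℕ} (m : ℕ) (f : Fin n → M) :
    ∑ k : Fin n, (if m = k then f k else 0) = if h : m < n then f ⟨m, h⟩ else 0 := by
  split_ifs with h
  · simpa [Fin.ext_iff] using Fintype.sum_ite_eq (⟨m, h⟩ : Fin n) f
  · exact sum_eq_zero fun k _ => if_neg (by omega)

theorem Matrix.exists_ne_zero_mulVec_eq_zero {K m n : Type*} [Field K] [Fintype m] [Fintype n]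
    (N : Matrix m n K) (h : Fintype.card m < Fintype.card n) : ∃ v ≠ 0, N *ᵥ v = 0 := by
  have hker := LinearMap.ker_ne_bot_of_finrank_lt (f := N.mulVecLin) (by simpa using h)
  obtain ⟨v, hv, hv0⟩ := Submodule.exists_mem_ne_zero_of_ne_bot hker
  exact ⟨v, hv0, hv⟩

theorem existsUnique_forall_mul_eq_iff {ι R m n p : Type*} [Ring R] [Fintype n]
    [Nonempty p] {M : ι → Matrix m n R} {B : Matrix m p R} {C₀ : Matrix n p R}
    (hC₀ : ∀ z, M z * C₀ = B) :
    (∃! C : Matrix n p R, ∀ z, M z * C = B) ↔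
      ∀ v : n → R, (∀ z, M z *ᵥ v = 0) → v = 0 := by
  constructor
  · rintro ⟨C, hC, huniq⟩ v hv
    have hsol := huniq (C + replicateCol p v) fun z => by
      rw [Matrix.mul_add, hC, ← replicateCol_mulVec, hv, replicateCol_zero, add_zero]
    rwa [add_eq_left, replicateCol_eq_zero] at hsol
  · refine fun h => ⟨C₀, hC₀, fun C hC => ?_⟩
    have hdiff (z : ι) : M z * (C - C₀) = 0 := by rw [Matrix.mul_sub, hC, hC₀, sub_self]
    ext i j
    have hcol := h (fun i => (C - C₀) i j) fun z =>
      funext fun a => congrFun (congrFun (hdiff z) a) j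
    exact sub_eq_zero.1 (congrFun hcol i)

theorem sum_neg_one_pow_mul_choose_mul_choose {q a c : ℕ} (hca : c ≤ a) (haq : a < q) :
    ∑ b ∈ range q, (-1 : ℤ) ^ b * (a + b).choose b * q.choose (b + c + 1) =
      if a = c then 1 else 0 := by
  have neg_choose (b : ℕ) : Ring.choose (-(a + 1 : ℤ)) b = (-1) ^ b * (a + b).choose b := by
    rw [Ring.choose_neg, Units.smul_def, Int.negOnePow_def,
      show (a + 1 : ℤ) + b - 1 = ((a + b : ℕ) : ℤ) by push_cast; ring, Ring.choose_natCast]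
    simp
  have vandermonde :=
    Ring.add_choose_eq (r := -(a + 1 : ℤ)) (s := q) (q - c - 1) (Commute.all _ _)
  rw [show -(a + 1 : ℤ) + q = ((q - a - 1 : ℕ) : ℤ) by omega, Ring.choose_natCast,
    Nat.sum_antidiagonal_eq_sum_range_succ_mk] at vandermonde
  have hlhs : (q - a - 1).choose (q - c - 1) = if a = c then 1 else 0 := by
    split_ifs with h
    · simp [h]
    · exact Nat.choose_eq_zero_of_lt (by omega)
  rw [hlhs] at vandermonde
  push_cast at vandermonde
  rw [vandermonde, ← sum_range_add_sum_Ico _ (show q - c - 1 + 1 ≤ q by omega),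
    sum_eq_zero (s := Ico _ _) fun b hb => ?_, add_zero]
  · refine sum_congr rfl fun b hb => ?_
    have := mem_range.1 hb
    rw [neg_choose, Ring.choose_natCast,
      Nat.choose_symm_of_eq_add (show q = (q - c - 1 - b) + (b + c + 1) by omega)]
  · have := (mem_Ico.1 hb).1
    rw [Nat.choose_eq_zero_of_lt (show q < b + c + 1 by omega)]
    simp

section

variable {R : Type*} [CommRing R]

theorem sum_iterate_derivative_X_pow_mul {n : ℕ} (P : Fin n → R[X]) (a : ℕ) :
    ∑ k : Fin n, derivative^[k] (X ^ a * P k) = ∑ i ∈ range (a + 1),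
      a.descFactorial i •
        (X ^ (a - i) * ∑ k : Fin n, (k : ℕ).choose i • derivative^[k - i] (P k)) := by
  have leibniz (k : ℕ) (p : R[X]) : derivative^[k] (X ^ a * p) = ∑ i ∈ range (a + 1),
      a.descFactorial i • (X ^ (a - i) * k.choose i • derivative^[k - i] p) := by
    rw [mul_comm, iterate_derivative_mul_X_pow]
    refine sum_subset (range_subset_range.2 (by omega)) (fun i hi hi' => ?_) |>.trans
      (sum_congr rfl fun i _ => ?_)
    · simp only [mem_range] at hi hi'
      simp [Nat.choose_eq_zero_of_lt (show k < i by omega)]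
    · rw [mul_smul, smul_comm, mul_comm, mul_smul_comm]
  simp_rw [leibniz, mul_sum, smul_sum]
  exact sum_comm

theorem eq_zero_of_sum_iterate_derivative_X_pow_mul_eq_zero [IsDomain R] [CharZero R]
    {n : ℕ} {P : Fin n → R[X]} (h : ∀ a < n, ∑ k : Fin n, derivative^[k] (X ^ a * P k) = 0) :
    P = 0 := by
  have hQ (i : ℕ) (hi : i < n) :
      ∑ k : Fin n, (k : ℕ).choose i • derivative^[k - i] (P k) = 0 := by
    induction i using Nat.strong_induction_on with
    | _ i ih =>
      have hi' := h i hi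
      rw [sum_iterate_derivative_X_pow_mul, sum_range_succ, sum_eq_zero fun j hj => by
        rw [ih j (mem_range.1 hj) ((mem_range.1 hj).trans hi), mul_zero, smul_zero], zero_add,
        Nat.descFactorial_self, Nat.sub_self, pow_zero, one_mul] at hi'
      exact (smul_eq_zero.1 hi').resolve_left (Nat.factorial_ne_zero i)
  have hP (d : ℕ) (k : Fin n) (hk : n ≤ k + d) : P k = 0 := by
    induction d generalizing k with
    | zero => omega
    | succ d ih =>
      have hQk := hQ k k.isLt
      rwa [Fintype.sum_eq_single k fun j hj => ?_, Nat.choose_self, Nat.sub_self, one_smul,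
        Function.iterate_zero_apply] at hQk
      rcases lt_or_gt_of_ne (Fin.val_ne_of_ne hj) with hjk | hkj
      · rw [Nat.choose_eq_zero_of_lt hjk, zero_smul]
      · rw [ih j (by omega), iterate_map_zero, smul_zero]
  funext k
  exact hP n k (by omega)

end

theorem M0cal_apply (q r ν : ℕ) (z : ℝ) (a : Fin q) (p : Fin ν × Fin r) :
    M0cal q r ν z a p = ((a + p.2 : ℕ).descFactorial p.1 : ℝ) * z ^ (a + p.2 - p.1 : ℕ) := by
  simp [M0cal, Md]

theorem inv_Dm (m : ℕ) : (Dm m)⁻¹ = diagonal fun i : Fin m => ((i : ℕ)! : ℝ)⁻¹ := by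
  refine inv_eq_left_inv ?_
  rw [Dm, diagonal_mul_diagonal, ← diagonal_one]
  congr
  funext i
  exact inv_mul_cancel₀ (by positivity)

def M0RightInv (q r ν : ℕ) : Matrix (Fin ν × Fin r) (Fin q) ℝ :=
  ((1 : Matrix (Fin ν) (Fin ν) ℝ) ⊗ₖ (Dm r)⁻¹) * B0cal q r ν * (Dm q)⁻¹

theorem M0RightInv_apply (q r ν : ℕ) (p : Fin ν × Fin r) (c : Fin q) :
    M0RightInv q r ν p c = if (p.2 + c : ℕ) = p.1 then
      (-1 : ℝ) ^ (p.2 : ℕ) * q.choose (p.1 + 1) / ((p.2 : ℕ)! * (c : ℕ)!) else 0 := by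
  rw [M0RightInv, inv_Dm, inv_Dm, ← diagonal_one, diagonal_kronecker_diagonal, mul_diagonal,
    diagonal_mul]
  simp only [B0cal, Bk, of_apply, one_mul]
  split_ifs <;> ring

theorem M0cal_mul_M0RightInv_apply {q r ν : ℕ} (hrq : q ≤ r) (hνq : q ≤ ν) (z : ℝ)
    (a c : Fin q) :
    (M0cal q r ν z * M0RightInv q r ν) a c = ∑ b ∈ range q,
      (a + b : ℕ).descFactorial (b + c) * z ^ (a - c : ℕ) *
        ((-1 : ℝ) ^ b * q.choose (b + c + 1) / (b ! * (c : ℕ)!)) := by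
  set g : ℕ → ℝ := fun b => (a + b : ℕ).descFactorial (b + c) * z ^ (a - c : ℕ) *
    ((-1 : ℝ) ^ b * q.choose (b + c + 1) / (b ! * (c : ℕ)!))
  have hg (b : ℕ) (hb : q ≤ b + c) : g b = 0 := by
    simp [g, Nat.choose_eq_zero_of_lt (show q < b + c + 1 by omega)]
  have inner (b : Fin r) :
      ∑ k : Fin ν, M0cal q r ν z a (k, b) * M0RightInv q r ν (k, b) c = g b := by
    simp only [M0cal_apply, M0RightInv_apply, mul_ite, mul_zero]
    rw [Fin.sum_ite_val_eq]
    split_ifs with h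
    · simp only [g, show (a + b - (b + c) : ℕ) = a - c by omega]
    · exact (hg b (by omega)).symm
  rw [mul_apply, Fintype.sum_prod_type, sum_comm, sum_congr rfl fun b _ => inner b,
    Fin.sum_univ_eq_sum_range g, ← sum_subset (range_subset_range.2 hrq)]
  intro b _ hb
  exact hg b (by simp only [mem_range, not_lt] at hb; omega)

theorem M0cal_mul_M0RightInv {q r ν : ℕ} (hrq : q ≤ r) (hνq : q ≤ ν) (z : ℝ) :
    M0cal q r ν z * M0RightInv q r ν = 1 := by
  ext a c
  have split_descFactorial (b : ℕ) : (a + b : ℕ).descFactorial (b + c) =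
      (a : ℕ).descFactorial c * (b ! * (a + b).choose b) := by
    rw [← descFactorial_eq_factorial_mul_choose,
      ← descFactorial_mul_descFactorial (le_add_right b c)]
    simp
  have hterm (b : ℕ) : (a + b : ℕ).descFactorial (b + c) * z ^ (a - c : ℕ) *
        ((-1 : ℝ) ^ b * q.choose (b + c + 1) / (b ! * (c : ℕ)!)) =
      (-1 : ℝ) ^ b * (a + b).choose b * q.choose (b + c + 1) *
        ((a : ℕ).descFactorial c / (c : ℕ)! * z ^ (a - c : ℕ)) := by
    rw [split_descFactorial]
    push_cast
    field_simp
  have identity (hca : (c : ℕ) ≤ a) : ∑ b ∈ range q,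
      (-1 : ℝ) ^ b * (a + b).choose b * q.choose (b + c + 1) = if a = c then 1 else 0 := by
    have := sum_neg_one_pow_mul_choose_mul_choose hca a.isLt
    simp only [Fin.val_inj] at this
    exact_mod_cast this
  rw [M0cal_mul_M0RightInv_apply hrq hνq, sum_congr rfl fun b _ => hterm b, ← sum_mul]
  rcases le_or_gt (c : ℕ) a with hca | hac
  · rw [identity hca]
    split_ifs with h
    · subst h
      simp [descFactorial_self, factorial_ne_zero]
    · simp [one_apply_ne h]
  · simp [descFactorial_eq_zero_iff_lt.2 hac, one_apply_ne (Fin.ne_of_lt hac)]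

def blockPoly {ν r : ℕ} (v : Fin ν × Fin r → ℝ) (k : Fin ν) : ℝ[X] :=
  ∑ b : Fin r, C (v (k, b)) * X ^ (b : ℕ)

theorem coeff_blockPoly {ν r : ℕ} (v : Fin ν × Fin r → ℝ) (k : Fin ν) (b : Fin r) :
    (blockPoly v k).coeff b = v (k, b) := by
  simp [blockPoly, Fin.val_inj]

theorem M0cal_mulVec_apply {q r ν : ℕ} (z : ℝ) (v : Fin ν × Fin r → ℝ) (a : Fin q) :
    (M0cal q r ν z *ᵥ v) a =
      (∑ k : Fin ν, derivative^[k] (X ^ (a : ℕ) * blockPoly v k)).eval z := by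
  rw [mulVec, dotProduct, Fintype.sum_prod_type, eval_finsetSum]
  refine sum_congr rfl fun k _ => ?_
  rw [blockPoly, mul_sum, iterate_derivative_sum, eval_finsetSum]
  refine sum_congr rfl fun b _ => ?_
  rw [M0cal_apply, mul_left_comm, ← pow_add, iterate_derivative_C_mul,
    iterate_derivative_X_pow_eq_C_mul]
  simp only [eval_mul, eval_C, eval_pow, eval_X]
  ring

theorem eq_zero_of_forall_M0cal_mulVec_eq_zero {q r : ℕ} {v : Fin q × Fin r → ℝ}
    (hv : ∀ z, M0cal q r q z *ᵥ v = 0) : v = 0 := by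
  have hP : blockPoly v = 0 :=
    eq_zero_of_sum_iterate_derivative_X_pow_mul_eq_zero fun a ha => Polynomial.funext fun z => by
      simpa [M0cal_mulVec_apply] using congrFun (hv z) ⟨a, ha⟩
  funext p
  rw [← coeff_blockPoly v p.1 p.2, hP, Pi.zero_apply, coeff_zero, Pi.zero_apply]

theorem exists_ne_zero_forall_M0cal_mulVec_eq_zero {q r ν : ℕ} (hq : 0 < q) (hrq : q ≤ r)
    (hqν : q < ν) : ∃ v ≠ 0, ∀ z, M0cal q r ν z *ᵥ v = 0 := by
  let e (b : Fin q) : Fin ν × Fin r := (Fin.castLE hqν b.succ, Fin.castLE hrq b)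
  -- Column `e b` of `𝓜^0(z)` has entries `(a+b)^{\underline{b+1}} z^{a-1}`, which vanish at `a = 0`;
  -- `N` holds these coefficients for `a = 1, …, q-1`.
  let N : Matrix (Fin (q - 1)) (Fin q) ℝ :=
    of fun i b => ((i + 1 + b : ℕ).descFactorial (b + 1))
  obtain ⟨t, ht0, hNt⟩ := N.exists_ne_zero_mulVec_eq_zero (by simp only [Fintype.card_fin]; omega)
  refine ⟨∑ b, Pi.single (e b) (t b), fun hv => ht0 (funext fun b => ?_),
    fun z => funext fun a => ?_⟩
  · simpa [e, Pi.single_apply, Prod.ext_iff, eq_comm] using congrFun hv (e b)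
  · rw [mulVec_sum, Finset.sum_apply]
    simp only [mulVec_single, Pi.smul_apply, op_smul_eq_mul, col_apply, e, M0cal_apply,
      Fin.val_castLE, Fin.val_succ, Pi.zero_apply]
    rcases Nat.eq_zero_or_pos a with ha | ha
    · refine sum_eq_zero fun b _ => ?_
      rw [ha, zero_add, descFactorial_of_lt (lt_add_one _), cast_zero, zero_mul, zero_mul]
    · have hrow := congrFun hNt ⟨a - 1, by omega⟩
      simp only [N, mulVec, dotProduct, of_apply, Pi.zero_apply, Nat.sub_add_cancel ha] at hrow
      simp_rw [show ∀ b : ℕ, a + b - (b + 1) = a - 1 by omega, mul_right_comm _ (z ^ _),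
        ← sum_mul, hrow, zero_mul]

theorem statement18_general (q r ν : ℕ) (hq : 0 < q)
    (hrq : q ≤ r) (hνq : q ≤ ν) :
    (∀ z : ℝ,
      M0cal q r ν z *
        (((1 : Matrix (Fin ν) (Fin ν) ℝ) ⊗ₖ (Dm r)⁻¹) * B0cal q r ν * (Dm q)⁻¹) = 1) ∧
    ((∃! C : Matrix (Fin ν × Fin r) (Fin q) ℝ, ∀ z : ℝ, M0cal q r ν z * C = 1) ↔ ν = q) := by
  have hC := M0cal_mul_M0RightInv hrq hνq
  have : Nonempty (Fin q) := Fin.pos_iff_nonempty.1 hq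
  refine ⟨hC, (existsUnique_forall_mul_eq_iff hC).trans ⟨fun hinj => ?_, ?_⟩⟩
  · by_contra hne
    obtain ⟨v, hv0, hv⟩ := exists_ne_zero_forall_M0cal_mulVec_eq_zero hq hrq (hνq.lt_of_ne' hne)
    exact hv0 (hinj v hv)
  · rintro rfl v
    exact eq_zero_of_forall_M0cal_mulVec_eq_zero

theorem statement18 (q r ν : ℕ) (hq : 0 < q) (hr : 0 < r) (hν : 0 < ν)
    (hrq : q ≤ r) (hνq : q ≤ ν) :
    (∀ z : ℝ,
      M0cal q r ν z *
        (((1 : Matrix (Fin ν) (Fin ν) ℝ) ⊗ₖ (Dm r)⁻¹) * B0cal q r ν * (Dm q)⁻¹) = 1) ∧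
    ((∃! C : Matrix (Fin ν × Fin r) (Fin q) ℝ, ∀ z : ℝ, M0cal q r ν z * C = 1) ↔ ν = q) :=
  statement18_general q r ν hq hrq hνq
end
end
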